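/- arXiv:0809.3122 — 2 statements merged into one kernel-verified Lean document; each statement's English description precedes it below -/
import Mathlib

section
/- Let κ ∈ ℂ not be a negative rational number. Then there exists a constant R₁ > 0 such that for every partition λ = (λ_1,…,λ_n) with at most n parts, ∏_{1≤i<j≤n} | [κ(j−i−1)+1]_{λ_i−λ_j} / [κ(j−i)+1]_{λ_i−λ_j} | ≤ R₁^{|λ|}. -/
open MeasureTheory Finset Real

noncomputable section

/-- `κ` is not a negative rational number. -/
def NotNegRat (κ : ℂ) : Prop := ∀ q : ℚ, q < 0 → κ ≠ (q : ℂ)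

/-- A partition with at most `n` parts: a weakly decreasing map `Fin n → ℕ`. -/
def IsPartition {n : ℕ} (lam : Fin n → ℕ) : Prop := ∀ i j : Fin n, i ≤ j → lam j ≤ lam i

/-- The weight `|λ|` of a partition. -/
def wt {n : ℕ} (lam : Fin n → ℕ) : ℕ := ∑ i, lam i

/-- Strict dominance order on partitions of equal weight. -/
def DomLT {n : ℕ} (μ lam : Fin n → ℕ) : Prop :=
  wt μ = wt lam ∧ μ ≠ lam ∧
    ∀ k : Fin n, ∑ i ∈ univ.filter (· ≤ k), μ i ≤ ∑ i ∈ univ.filter (· ≤ k), lam i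

/-- Monomial symmetric polynomial `m_λ`: the sum over all distinct rearrangements of `λ`. -/
def mSym {n : ℕ} (lam : Fin n → ℕ) : MvPolynomial (Fin n) ℂ :=
  ∑ d ∈ Finset.image (fun σ : Equiv.Perm (Fin n) =>
      Finsupp.equivFunOnFinite.symm (lam ∘ σ)) Finset.univ,
    MvPolynomial.monomial d (1 : ℂ)

/-- The operator `D = Σ x_i² ∂_i² + 2κ Σ_{i≠j} x_i²/(x_i-x_j) ∂_i` applied to a polynomial,
evaluated at a point `x`. -/
def jackOp {n : ℕ} (κ : ℂ) (P : MvPolynomial (Fin n) ℂ) (x : Fin n → ℂ) : ℂ :=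
  ∑ i, (x i) ^ 2 * MvPolynomial.eval x (MvPolynomial.pderiv i (MvPolynomial.pderiv i P)) +
    2 * κ * ∑ i, ∑ j ∈ univ.erase i,
      (x i) ^ 2 / (x i - x j) * MvPolynomial.eval x (MvPolynomial.pderiv i P)

/-- `P` is the Jack polynomial `P_λ(·;κ)`:  it is of the form `m_λ + Σ_{μ<λ} u_{λμ} m_μ`
and an eigenfunction of `D`. -/
def IsJack {n : ℕ} (κ : ℂ) (lam : Fin n → ℕ) (P : MvPolynomial (Fin n) ℂ) : Prop :=
  P - mSym lam ∈ Submodule.span ℂ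
      {Q | ∃ μ : Fin n → ℕ, IsPartition μ ∧ DomLT μ lam ∧ Q = mSym μ} ∧
  ∃ e : ℂ, ∀ x : Fin n → ℂ, (∀ i j : Fin n, i ≠ j → x i ≠ x j) →
    jackOp κ P x = e * MvPolynomial.eval x P

/-- The Jack polynomial `P_λ(·;κ)` (defined when it exists and is unique). -/
def jackPoly {n : ℕ} (κ : ℂ) (lam : Fin n → ℕ) : MvPolynomial (Fin n) ℂ := by
  classical exact if h : ∃! P, IsJack κ lam P then h.choose else 0

end

noncomputable section

/-- The operator `D^B` applied to a polynomial, evaluated at a point `x`. -/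
def besselOp {n : ℕ} (a κ : ℂ) (P : MvPolynomial (Fin n) ℂ) (x : Fin n → ℂ) : ℂ :=
  ∑ i, MvPolynomial.eval x (MvPolynomial.pderiv i (MvPolynomial.pderiv i P)) +
    ∑ i, (a * x i + 2) * MvPolynomial.eval x (MvPolynomial.pderiv i P) +
    2 * κ * ∑ i, ∑ j ∈ univ.erase i,
      (x i) ^ 2 / (x i - x j) * MvPolynomial.eval x (MvPolynomial.pderiv i P)

/-- Strict containment `μ ⊂ λ` of partitions. -/
def SubsetLT {n : ℕ} (μ lam : Fin n → ℕ) : Prop := (∀ i, μ i ≤ lam i) ∧ μ ≠ lam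

/-- `Y` is the multivariable Bessel polynomial `Y_λ(·;a,κ)`:  it is of the form
`P_λ + Σ_{μ⊂λ} u_{λμ} P_μ` and an eigenfunction of `D^B`. -/
def IsBessel {n : ℕ} (a κ : ℂ) (lam : Fin n → ℕ) (Y : MvPolynomial (Fin n) ℂ) : Prop :=
  Y - jackPoly κ lam ∈ Submodule.span ℂ
      {Q | ∃ μ : Fin n → ℕ, IsPartition μ ∧ SubsetLT μ lam ∧ Q = jackPoly κ μ} ∧
  ∃ e : ℂ, ∀ x : Fin n → ℂ, (∀ i j : Fin n, i ≠ j → x i ≠ x j) →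
    besselOp a κ Y x = e * MvPolynomial.eval x Y

/-- The multivariable Bessel polynomial `Y_λ(·;a,κ)` (defined when it exists and is unique). -/
def besselPoly {n : ℕ} (a κ : ℂ) (lam : Fin n → ℕ) : MvPolynomial (Fin n) ℂ := by
  classical exact if h : ∃! Y, IsBessel a κ lam Y then h.choose else 0

/-- The Pochhammer symbol `[α]_m = α(α+1)⋯(α+m-1)`. -/
def poch (α : ℂ) (m : ℕ) : ℂ := ∏ k ∈ Finset.range m, (α + k)

/-- The type of partitions with at most `n` parts. -/
def PartitionN (n : ℕ) := {lam : Fin n → ℕ // IsPartition lam}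

/-- The coefficient of `P_λ(-2x⁻¹;κ)` in the series defining the weight function `𝒲`. -/
def Wcoef {n : ℕ} (a κ : ℂ) (lam : Fin n → ℕ) : ℂ :=
  (∏ p ∈ univ.filter (fun p : Fin n × Fin n => p.1 < p.2),
      Complex.Gamma (κ * (((p.2 : ℕ) : ℂ) - ((p.1 : ℕ) : ℂ)) + ((lam p.1 : ℂ) - (lam p.2 : ℂ)) + 1) /
      Complex.Gamma (κ * (((p.2 : ℕ) : ℂ) - ((p.1 : ℕ) : ℂ) - 1) + ((lam p.1 : ℂ) - (lam p.2 : ℂ)) + 1)) *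
  ∏ i : Fin n,
      Complex.Gamma (κ * (((i : ℕ) : ℂ) + 1)) *
        Complex.Gamma (a + κ * (2 * (n : ℂ) - ((i : ℕ) : ℂ) - 2)) /
      (Complex.Gamma κ *
        Complex.Gamma (a - 1 + κ * (2 * (n : ℂ) - ((i : ℕ) : ℂ) - 2) + (lam i : ℂ)))

/-- The weight function `𝒲(x;a,κ)`. -/
def scriptW (n : ℕ) (a κ : ℂ) (x : Fin n → ℂ) : ℂ :=
  (1 / ((2 * (π : ℂ) * Complex.I) ^ n * (n.factorial : ℂ))) *
    ∑' lam : PartitionN n, Wcoef a κ lam.1 *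
      MvPolynomial.eval (fun i => -2 / x i) (jackPoly κ lam.1)

/-- The weight function `W(x;a,κ) = 𝒲(x;a,κ) ∏_{i≠j} (1 - x_i/x_j)^κ`. -/
def weightW (n : ℕ) (a κ : ℂ) (x : Fin n → ℂ) : ℂ :=
  scriptW n a κ x *
    ∏ p ∈ univ.filter (fun p : Fin n × Fin n => p.1 ≠ p.2), (1 - x p.1 / x p.2) ^ κ

/-- The `L²` weight function `W_{L²}(x;a,κ)` on `ℝ₊ⁿ`. -/
def wL2 (n : ℕ) (a κ : ℂ) (x : Fin n → ℝ) : ℂ :=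
  (1 / (n.factorial : ℂ)) * (∏ i, ((x i : ℂ) ^ (a - 2) * Complex.exp (-2 / (x i : ℂ)))) *
    ∏ p ∈ univ.filter (fun p : Fin n × Fin n => p.1 < p.2), ((|x p.1 - x p.2| : ℝ) : ℂ) ^ (2 * κ)

end

/-!
The `k`-th factor of the ratio for the pair `i < j` is `(z + k - κ) / (z + k)` with
`z = κ (j - i) + 1`. As `κ` is not a negative rational, no `z + k` vanishes, and since
`‖z + k‖ → ∞` the finitely many sequences `z + k` stay at distance `≥ ε > 0` from `0`.
Every factor then has modulus at most `1 + ‖κ‖ / ε`, and there are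
`∑_{i<j} (λ_i - λ_j) ≤ n |λ|` factors.
-/

theorem NotNegRat.mul_add_ne_zero {κ : ℂ} (hκ : NotNegRat κ) {d c : ℚ} (hd : 0 < d)
    (hc : 0 < c) : κ * d + c ≠ 0 := by
  intro h
  refine hκ (-c / d) (div_neg_of_neg_of_pos (neg_neg_of_pos hc) hd) ?_
  have hd' : (d : ℂ) ≠ 0 := by exact_mod_cast hd.ne'
  push_cast
  field_simp
  linear_combination h

theorem tendsto_norm_add_natCast_atTop (z : ℂ) :
    Filter.Tendsto (fun k : ℕ => ‖z + k‖) Filter.atTop Filter.atTop := by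
  refine Filter.tendsto_atTop_mono (fun k => ?_)
    (Filter.tendsto_atTop_add_const_right _ (-‖z‖) tendsto_natCast_atTop_atTop)
  have := norm_sub_le (z + k) z
  rw [add_sub_cancel_left, Complex.norm_natCast] at this
  linarith

theorem eventually_le_norm_add_natCast {z : ℂ} (hz : ∀ k : ℕ, z + k ≠ 0) :
    ∀ᶠ ε in nhdsWithin (0 : ℝ) (Set.Ioi 0), ∀ k : ℕ, ε ≤ ‖z + k‖ := by
  have h := tendsto_norm_add_natCast_atTop z
  rw [← Nat.cofinite_eq_atTop] at h
  obtain ⟨k₀, hk₀⟩ := h.exists_forall_le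
  filter_upwards [Ioo_mem_nhdsGT (norm_pos_iff.2 (hz k₀))] with ε hε k
  exact hε.2.le.trans (hk₀ k)

theorem norm_poch_sub_div_poch_le {z : ℂ} {ε : ℝ} (hε : 0 < ε) (hz : ∀ k : ℕ, ε ≤ ‖z + k‖)
    (u : ℂ) (m : ℕ) : ‖poch (z - u) m / poch z m‖ ≤ (1 + ‖u‖ / ε) ^ m := by
  calc ‖poch (z - u) m / poch z m‖ = ∏ k ∈ range m, ‖z - u + k‖ / ‖z + k‖ := by
        rw [poch, poch, ← prod_div_distrib, norm_prod]
        simp only [norm_div]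
    _ ≤ ∏ _k ∈ range m, (1 + ‖u‖ / ε) := prod_le_prod (fun _ _ => by positivity) fun k _ => ?_
    _ = (1 + ‖u‖ / ε) ^ m := by rw [prod_const, card_range]
  have hzk : 0 < ‖z + k‖ := hε.trans_le (hz k)
  rw [div_le_iff₀ hzk]
  calc _ = ‖(z + k) - u‖ := by rw [sub_add_eq_add_sub]
    _ ≤ ‖z + k‖ + ‖u‖ / ε * ε := by rw [div_mul_cancel₀ _ hε.ne']; exact norm_sub_le _ _
    _ ≤ ‖z + k‖ + ‖u‖ / ε * ‖z + k‖ := by gcongr; exact hz k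
    _ = (1 + ‖u‖ / ε) * ‖z + k‖ := by ring

theorem sum_tsub_le_mul_wt {n : ℕ} (lam : Fin n → ℕ) :
    ∑ p ∈ univ.filter (fun p : Fin n × Fin n => p.1 < p.2), (lam p.1 - lam p.2) ≤ n * wt lam :=
  calc ∑ p ∈ univ.filter (fun p : Fin n × Fin n => p.1 < p.2), (lam p.1 - lam p.2)
      ≤ ∑ p : Fin n × Fin n, lam p.1 :=
        (sum_le_sum fun _ _ => Nat.sub_le _ _).trans (sum_le_sum_of_subset (filter_subset _ _))
    _ = n * wt lam := by simp [Fintype.sum_prod_type, wt, mul_sum]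

/-- The bound `∏_{i<j} |[κ(j-i-1)+1]_{λ_i-λ_j} / [κ(j-i)+1]_{λ_i-λ_j}| ≤ R₁^{|λ|}`. -/
theorem poch_ratio_bound (n : ℕ) (κ : ℂ) (hκ : NotNegRat κ) :
    ∃ R₁ : ℝ, 0 < R₁ ∧ ∀ lam : Fin n → ℕ, IsPartition lam →
      (∏ p ∈ univ.filter (fun p : Fin n × Fin n => p.1 < p.2),
        ‖(poch (κ * (((p.2 : ℕ) : ℂ) - ((p.1 : ℕ) : ℂ) - 1) + 1) (lam p.1 - lam p.2) /
            poch (κ * (((p.2 : ℕ) : ℂ) - ((p.1 : ℕ) : ℂ)) + 1) (lam p.1 - lam p.2))‖) ≤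
      R₁ ^ wt lam := by
  set pairs := univ.filter (fun p : Fin n × Fin n => p.1 < p.2)
  have hz : ∀ p ∈ pairs, ∀ k : ℕ, κ * (((p.2 : ℕ) : ℂ) - ((p.1 : ℕ) : ℂ)) + 1 + k ≠ 0 := by
    intro p hp k
    have hlt : ((p.1 : ℕ) : ℚ) < (p.2 : ℕ) := by exact_mod_cast (mem_filter.1 hp).2
    convert hκ.mul_add_ne_zero (sub_pos.2 hlt) (by positivity : (0 : ℚ) < 1 + k) using 1
    push_cast
    ring
  obtain ⟨ε, hbound, hε⟩ := (((Filter.eventually_all_finset pairs).2 fun p hp =>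
    eventually_le_norm_add_natCast (hz p hp)).and self_mem_nhdsWithin).exists
  set C := 1 + ‖κ‖ / ε
  have hC : 1 ≤ C := le_add_of_nonneg_right (by positivity)
  refine ⟨C ^ n, by positivity, fun lam _ => ?_⟩
  calc _ ≤ ∏ p ∈ pairs, C ^ (lam p.1 - lam p.2) := by
        refine prod_le_prod (fun _ _ => norm_nonneg _) fun p hp => ?_
        rw [show κ * (((p.2 : ℕ) : ℂ) - ((p.1 : ℕ) : ℂ) - 1) + 1
          = κ * (((p.2 : ℕ) : ℂ) - ((p.1 : ℕ) : ℂ)) + 1 - κ by ring]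
        exact norm_poch_sub_div_poch_le hε (hbound p hp) κ _
    _ = C ^ ∑ p ∈ pairs, (lam p.1 - lam p.2) := prod_pow_eq_pow_sum _ _ _
    _ ≤ C ^ (n * wt lam) := pow_le_pow_right₀ hC (sum_tsub_le_mul_wt lam)
    _ = (C ^ n) ^ wt lam := pow_mul _ _ _
end

section
/- Let κ ∈ ℂ not be a negative rational number. Then there exists a constant R₂ > 0 such that for every partition λ = (λ_1,…,λ_n) with at most n parts, |κ|^{|λ|} · J_λ(1^n;|κ|) / |h^λ(κ)| ≤ R₂^{|λ|}, where h^λ(κ) = ∏_{i=1}^{ℓ(λ)} ∏_{j=1}^{λ_i} (λ_i − j + κ(λ′_j − i + 1)) and 1^n = (1,…,1). -/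
open MeasureTheory Finset Real

noncomputable section

/-- The conjugate partition: `λ′_j = #{i : λ_i ≥ j}`. -/
def conjPart {n : ℕ} (lam : Fin n → ℕ) (j : ℕ) : ℕ :=
  (univ.filter (fun i : Fin n => j ≤ lam i)).card

/-- `h^λ(κ) = ∏_{i} ∏_{j=1}^{λ_i} (λ_i - j + κ(λ′_j - i + 1))` (with `i`, `j` 1-based). -/
def hpoly {n : ℕ} (κ : ℂ) (lam : Fin n → ℕ) : ℂ :=
  ∏ i : Fin n, ∏ j ∈ Finset.range (lam i),
    ((lam i : ℂ) - ((j : ℂ) + 1) + κ * ((conjPart lam (j + 1) : ℂ) - ((i : ℕ) : ℂ)))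

/-- `J_λ(1ⁿ;t) = t^{-|λ|} ∏_i ∏_{j=1}^{λ_i} (j - 1 + t(n - i + 1))` (with `i`, `j` 1-based),
for a real parameter `t`. -/
def JoneVal (n : ℕ) (t : ℝ) (lam : Fin n → ℕ) : ℝ :=
  t ^ (-(wt lam : ℤ)) *
    ∏ i : Fin n, ∏ j ∈ Finset.range (lam i), ((j : ℝ) + t * ((n : ℝ) - ((i : ℕ) : ℝ)))

end

/-!
Write the box `(i, j)` of `λ` as `s`, with arm `a(s) = λ_i - j - 1` and leg
`l(s) = λ′_{j+1} - i - 1`. Then `h^λ(κ) = ∏_s (a(s) + κ (l(s) + 1))` with `1 ≤ l(s) + 1 ≤ n`,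
while reversing each row bounds `|κ|^{|λ|} J_λ(1ⁿ;|κ|)` by `∏_s (a(s) + |κ| (n - i))`. So it
suffices to bound `(a + |κ| n) / |a + κ b|` uniformly in `a ∈ ℕ` and `1 ≤ b ≤ n`: for large `a`
the ratio is at most `2`, and the finitely many remaining denominators vanish only when `κ = 0`
and `a = 0`, because `κ` is not a negative rational.
-/

theorem NotNegRat.eq_zero_of_natCast_add_mul_eq_zero {κ : ℂ} (hκ : NotNegRat κ) {a b : ℕ}
    (hb : 0 < b) (h : (a : ℂ) + κ * b = 0) : a = 0 ∧ κ = 0 := by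
  have hb' : (b : ℂ) ≠ 0 := Nat.cast_ne_zero.mpr hb.ne'
  have hκa : κ = ((-(a / b : ℚ) : ℚ) : ℂ) := by
    push_cast
    field_simp
    linear_combination h
  rcases Nat.eq_zero_or_pos a with rfl | ha
  · simpa using hκa
  · exact absurd hκa (hκ _ (neg_neg_of_pos (by positivity)))

theorem NotNegRat.exists_add_le_mul_norm_add_mul {κ : ℂ} (hκ : NotNegRat κ) (n : ℕ) :
    ∃ C : ℝ, 0 < C ∧ ∀ a b : ℕ, 0 < b → b ≤ n →
      (a : ℝ) + ‖κ‖ * n ≤ C * ‖(a : ℂ) + κ * b‖ := by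
  set t := ‖κ‖
  set S := range ⌈3 * t * n⌉₊ ×ˢ Icc 1 n
  set ratio : ℕ × ℕ → ℝ := fun p => (p.1 + t * n) / ‖(p.1 : ℂ) + κ * p.2‖
  have ratio_nonneg : ∀ p ∈ S, 0 ≤ ratio p := fun p _ => by positivity
  refine ⟨2 + ∑ p ∈ S, ratio p, by positivity, fun a b hb hbn => ?_⟩
  have hsum := sum_nonneg ratio_nonneg
  rcases lt_or_ge a ⌈3 * t * n⌉₊ with ha | ha
  · by_cases hz : (a : ℂ) + κ * b = 0
    · obtain ⟨rfl, rfl⟩ := hκ.eq_zero_of_natCast_add_mul_eq_zero hb hz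
      simp [t]
    have hmem : (a, b) ∈ S := mem_product.mpr ⟨mem_range.mpr ha, mem_Icc.mpr ⟨hb, hbn⟩⟩
    have hle : ratio (a, b) ≤ 2 + ∑ p ∈ S, ratio p := by
      linarith [single_le_sum ratio_nonneg hmem]
    exact (div_le_iff₀ (norm_pos_iff.mpr hz)).mp hle
  · have h3tn : 3 * t * n ≤ a := (Nat.ceil_le).mp ha
    have hlower : (a : ℝ) - t * n ≤ ‖(a : ℂ) + κ * b‖ := by
      have hbn' : (b : ℝ) ≤ n := by exact_mod_cast hbn
      have := norm_sub_norm_le (a : ℂ) (-(κ * b))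
      rw [sub_neg_eq_add, norm_neg, norm_mul, Complex.norm_natCast, Complex.norm_natCast] at this
      nlinarith [norm_nonneg κ]
    nlinarith [norm_nonneg ((a : ℂ) + κ * b)]

theorem IsPartition.lt_conjPart {n : ℕ} {lam : Fin n → ℕ} (hlam : IsPartition lam) {i : Fin n}
    {j : ℕ} (hj : j < lam i) : (i : ℕ) < conjPart lam (j + 1) := by
  have hsub : Iic i ⊆ univ.filter (fun i' : Fin n => j + 1 ≤ lam i') := fun i' hi' =>
    mem_filter.mpr ⟨mem_univ _, hj.trans_le (hlam i' i (mem_Iic.mp hi'))⟩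
  have := card_le_card hsub
  rw [Fin.card_Iic] at this
  exact this

theorem conjPart_le {n : ℕ} (lam : Fin n → ℕ) (j : ℕ) : conjPart lam j ≤ n :=
  (card_filter_le _ _).trans_eq (card_fin n)

theorem hpoly_factor_eq {n : ℕ} (κ : ℂ) {lam : Fin n → ℕ} (hlam : IsPartition lam) {i : Fin n}
    {j : ℕ} (hj : j < lam i) :
    (lam i : ℂ) - ((j : ℂ) + 1) + κ * ((conjPart lam (j + 1) : ℂ) - ((i : ℕ) : ℂ)) =
      ((lam i - 1 - j : ℕ) : ℂ) + κ * ((conjPart lam (j + 1) - i : ℕ) : ℂ) := by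
  have hi := hlam.lt_conjPart hj
  rw [Nat.cast_sub hi.le, Nat.cast_sub (by omega), Nat.cast_sub (by omega)]
  push_cast
  ring

theorem natCast_add_mul_sub_nonneg {n : ℕ} {t : ℝ} (ht : 0 ≤ t) (i : Fin n) (j : ℕ) :
    0 ≤ (j : ℝ) + t * ((n : ℝ) - ((i : ℕ) : ℝ)) := by
  have : ((i : ℕ) : ℝ) ≤ n := by exact_mod_cast i.isLt.le
  have := mul_nonneg ht (sub_nonneg.mpr this)
  positivity

theorem prod_le_pow_mul_norm_hpoly {n : ℕ} {κ : ℂ} {C : ℝ}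
    (hC : ∀ a b : ℕ, 0 < b → b ≤ n → (a : ℝ) + ‖κ‖ * n ≤ C * ‖(a : ℂ) + κ * b‖)
    {lam : Fin n → ℕ} (hlam : IsPartition lam) :
    ∏ i : Fin n, ∏ j ∈ range (lam i), ((j : ℝ) + ‖κ‖ * ((n : ℝ) - ((i : ℕ) : ℝ))) ≤
      C ^ wt lam * ‖hpoly κ lam‖ := by
  have hbox : ∀ (i : Fin n), ∀ j ∈ range (lam i),
      ((lam i - 1 - j : ℕ) : ℝ) + ‖κ‖ * ((n : ℝ) - ((i : ℕ) : ℝ)) ≤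
        C * ‖(lam i : ℂ) - ((j : ℂ) + 1) + κ * ((conjPart lam (j + 1) : ℂ) - ((i : ℕ) : ℂ))‖ := by
    intro i j hj
    have hj := mem_range.mp hj
    rw [hpoly_factor_eq κ hlam hj]
    have := hC (lam i - 1 - j) (conjPart lam (j + 1) - i) (by have := hlam.lt_conjPart hj; omega)
      ((Nat.sub_le _ _).trans (conjPart_le lam _))
    nlinarith [norm_nonneg κ, (Nat.cast_nonneg i : (0 : ℝ) ≤ (i : ℕ))]
  calc ∏ i : Fin n, ∏ j ∈ range (lam i), ((j : ℝ) + ‖κ‖ * ((n : ℝ) - ((i : ℕ) : ℝ)))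
      = ∏ i : Fin n, ∏ j ∈ range (lam i),
          (((lam i - 1 - j : ℕ) : ℝ) + ‖κ‖ * ((n : ℝ) - ((i : ℕ) : ℝ))) :=
        prod_congr rfl fun i _ => (prod_range_reflect
          (fun j => (j : ℝ) + ‖κ‖ * ((n : ℝ) - ((i : ℕ) : ℝ))) (lam i)).symm
    _ ≤ ∏ i : Fin n, ∏ j ∈ range (lam i), C *
          ‖(lam i : ℂ) - ((j : ℂ) + 1) + κ * ((conjPart lam (j + 1) : ℂ) - ((i : ℕ) : ℂ))‖ :=
        have hnonneg := natCast_add_mul_sub_nonneg (n := n) (norm_nonneg κ)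
        prod_le_prod (fun i _ => prod_nonneg fun j _ => hnonneg i _)
          fun i _ => prod_le_prod (fun j _ => hnonneg i _) (hbox i)
    _ = C ^ wt lam * ‖hpoly κ lam‖ := by
        simp only [prod_mul_distrib, prod_const, card_range, prod_pow_eq_pow_sum, hpoly,
          Complex.norm_prod]
        rfl

theorem pow_wt_mul_JoneVal_le {n : ℕ} {t : ℝ} (ht : 0 ≤ t) (lam : Fin n → ℕ) :
    t ^ wt lam * JoneVal n t lam ≤
      ∏ i : Fin n, ∏ j ∈ range (lam i), ((j : ℝ) + t * ((n : ℝ) - ((i : ℕ) : ℝ))) := by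
  have hprod : 0 ≤ ∏ i : Fin n, ∏ j ∈ range (lam i), ((j : ℝ) + t * ((n : ℝ) - ((i : ℕ) : ℝ))) :=
    prod_nonneg fun i _ => prod_nonneg fun j _ => natCast_add_mul_sub_nonneg ht i j
  rw [JoneVal, zpow_neg, zpow_natCast, ← mul_assoc]
  exact mul_le_of_le_one_left hprod mul_inv_le_one

/-- The bound `|κ|^{|λ|} J_λ(1ⁿ;|κ|)/|h^λ(κ)| ≤ R₂^{|λ|}`. -/
theorem Jack_one_over_h_bound (n : ℕ) (κ : ℂ) (hκ : NotNegRat κ) :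
    ∃ R₂ : ℝ, 0 < R₂ ∧ ∀ lam : Fin n → ℕ, IsPartition lam →
      ‖κ‖ ^ wt lam * JoneVal n ‖κ‖ lam /
          ‖hpoly κ lam‖ ≤
        R₂ ^ wt lam := by
  obtain ⟨C, hC₀, hC⟩ := hκ.exists_add_le_mul_norm_add_mul n
  refine ⟨C, hC₀, fun lam hlam => div_le_of_le_mul₀ (norm_nonneg _) (by positivity) ?_⟩
  exact (pow_wt_mul_JoneVal_le (norm_nonneg κ) lam).trans
    (prod_le_pow_mul_norm_hpoly hC hlam)
end
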